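/- The map sending a rigged configuration (m, J) ∈ RC_B(L, λ) to (m̂, Ĵ) defined by m̂_{2i}^{(a)} = m_i^{(a)}, m̂_j^{(a)} = 0 for odd j, and Ĵ^{(a,2i)} = the partition obtained from J^{(a,i)} by doubling every part, for 1 ≤ a ≤ n−1 and all i ≥ 1, together with m̂_i^{(n)} = m̂_i^{(n+1)} = m_i^{(n)} and Ĵ^{(n,i)} = Ĵ^{(n+1,i)} = J^{(n,i)}, is a bijection from RC_B(L, λ) onto RC^v(L, λ); moreover under this map the cocharge satisfies cc(m̂, Ĵ) = 2·cc(m, J). -/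

import Mathlib

/-!
Fold the Dynkin diagram of type `D_{n+1}` onto `B_n` by sending the two spin nodes `n`, `n+1` to
`n` (write `ā = min a n`). The forms are compatible with this folding:
`(α̂_a|α̂_b) = (α_ā|α_b)` for `b ≤ n-1` and `(α̂_a|α̂_n) + (α̂_a|α̂_{n+1}) = 2 (α_ā|α_n)`.
Substituting `m̂` into the type `D` sums therefore gives `p̂^{(a)}_{2i} = 2 p^{(a)}_i` for
`a ≤ n-1`, `p̂^{(n)}_i = p̂^{(n+1)}_i = p^{(n)}_i`, equivalent configuration conditions and
`cc(m̂) = 2 cc(m)`; the riggings correspond by halving. The one step that is not a substitution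
is admissibility at an odd `j` in a row `a ≤ n-1`: there `p̂^{(a)}` is midpoint concave, since
`j ↦ min(j, k)` is concave and affine across odd `j` unless `k` is odd, and odd `k` occur only in
the rows `n`, `n+1`, whose coefficient `-(α̂_a|α̂_n)` is nonnegative.
-/

namespace Stmt16

/-- A finitely supported matrix `(m_i^{(a)})`, indexed by pairs `(a, i)`. -/
abbrev Mat := ℕ × ℕ →₀ ℕ
/-- A finitely supported matrix of partitions `(J^{(a,i)})`, each partition encoded as the
multiset of its parts. -/
abbrev Rig := ℕ × ℕ →₀ Multiset ℕ

/-- Support is contained in `{1,…,N} × {1,2,3,…}`. -/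
def supIn (N : ℕ) (m : Mat) : Prop := ∀ q, m q ≠ 0 → 1 ≤ q.1 ∧ q.1 ≤ N ∧ 1 ≤ q.2
/-- Support is contained in `{1,…,N} × {1,2,3,…}`. -/
def supInJ (N : ℕ) (J : Rig) : Prop := ∀ q, J q ≠ 0 → 1 ≤ q.1 ∧ q.1 ≤ N ∧ 1 ≤ q.2

/-- The normalized bilinear form `(α_a|α_b)` of type `B_n`. -/
def formB (n a b : ℕ) : ℚ :=
  if a = b then (if a = n then 1 else 2)
  else if a + 1 = b ∨ b + 1 = a then -1
  else 0

/-- The scaling factors `t_a` of type `B_n`. -/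
def tB (n a : ℕ) : ℕ := if a = n then 2 else 1

/-- The Cartan integers `A_{ab} = 2(α_a|α_b)/(α_a|α_a)` of type `B_n`. -/
def cartanB (n a b : ℕ) : ℚ := 2 * formB n a b / formB n a a

/-- The type `B_n` configuration condition for the data `(L, λ)`. -/
def configB (n : ℕ) (lam : ℕ → ℕ) (L m : Mat) : Prop :=
  ∀ a, 1 ≤ a → a ≤ n →
    (m.sum fun q c => (q.2 : ℚ) * c * cartanB n a q.1)
      = (L.sum fun q c => if q.1 = a then (q.2 : ℚ) * c else 0) - lam a

/-- The type `B_n` vacancy numbers `p_i^{(a)}`. -/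
def vacB (n : ℕ) (L m : Mat) (a i : ℕ) : ℚ :=
  (L.sum fun q c => if q.1 = a then ((min i q.2 : ℕ) : ℚ) * c else 0)
  - (m.sum fun q c => formB n a q.1 * ((min (tB n q.1 * i) (tB n a * q.2) : ℕ) : ℚ) * c)

/-- Admissibility in type `B_n`. -/
def admB (n : ℕ) (L m : Mat) : Prop :=
  ∀ a i, 1 ≤ a → a ≤ n → 1 ≤ i → 0 ≤ vacB n L m a i

/-- The rigging conditions in type `B_n`. -/
def rigB (n : ℕ) (L m : Mat) (J : Rig) : Prop :=
  ∀ a i, 1 ≤ a → a ≤ n → 1 ≤ i →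
    (J (a,i)).card ≤ m (a,i) ∧ ∀ x ∈ J (a,i), 0 < x ∧ (x : ℚ) ≤ vacB n L m a i

/-- The quadratic part of the type `B_n` cocharge. -/
def ccB (n : ℕ) (m : Mat) : ℚ :=
  (1/2) * m.sum fun q c => m.sum fun r d =>
    formB n q.1 r.1 * ((min (tB n r.1 * q.2) (tB n q.1 * r.2) : ℕ) : ℚ) * c * d

/-- `Σ_{a,i} |J^{(a,i)}|`. -/
def Jsize (J : Rig) : ℚ := J.sum fun _ ms => (ms.sum : ℚ)

/-- The set of type `B_n` rigged configurations for the data `(L, λ)`. -/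
def RCB (n : ℕ) (lam : ℕ → ℕ) (L : Mat) : Set (Mat × Rig) :=
  {p | supIn n p.1 ∧ supInJ n p.2 ∧ configB n lam L p.1 ∧ admB n L p.1 ∧
       rigB n L p.1 p.2}

/-- The edge relation of the type `D_{n+1}` Dynkin diagram: `a—(a+1)` for `1 ≤ a ≤ n-1`
and the extra edge `(n-1)—(n+1)`. -/
def edgeD (n a b : ℕ) : Prop :=
  (a + 1 = b ∧ b ≤ n) ∨ (b + 1 = a ∧ a ≤ n) ∨ (a = n - 1 ∧ b = n + 1) ∨ (b = n - 1 ∧ a = n + 1)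

instance (n a b : ℕ) : Decidable (edgeD n a b) := by unfold edgeD; infer_instance

/-- The bilinear form of type `D_{n+1}` (equal to its Cartan matrix; all scaling
factors are 1). -/
def formD (n a b : ℕ) : ℚ :=
  if a = b then 2 else if edgeD n a b then -1 else 0

/-- The type `D_{n+1}` configuration condition. -/
def configD (n : ℕ) (lam : ℕ → ℚ) (L m : Mat) : Prop :=
  ∀ a, 1 ≤ a → a ≤ n + 1 →
    (m.sum fun q c => (q.2 : ℚ) * c * formD n a q.1)
      = (L.sum fun q c => if q.1 = a then (q.2 : ℚ) * c else 0) - lam a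

/-- The type `D_{n+1}` vacancy numbers. -/
def vacD (n : ℕ) (L m : Mat) (a i : ℕ) : ℚ :=
  (L.sum fun q c => if q.1 = a then ((min i q.2 : ℕ) : ℚ) * c else 0)
  - (m.sum fun q c => formD n a q.1 * ((min i q.2 : ℕ) : ℚ) * c)

/-- Admissibility in type `D_{n+1}`. -/
def admD (n : ℕ) (L m : Mat) : Prop :=
  ∀ a i, 1 ≤ a → a ≤ n + 1 → 1 ≤ i → 0 ≤ vacD n L m a i

/-- The rigging conditions in type `D_{n+1}`. -/
def rigD (n : ℕ) (L m : Mat) (J : Rig) : Prop :=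
  ∀ a i, 1 ≤ a → a ≤ n + 1 → 1 ≤ i →
    (J (a,i)).card ≤ m (a,i) ∧ ∀ x ∈ J (a,i), 0 < x ∧ (x : ℚ) ≤ vacD n L m a i

/-- The quadratic part of the type `D_{n+1}` cocharge. -/
def ccD (n : ℕ) (m : Mat) : ℚ :=
  (1/2) * m.sum fun q c => m.sum fun r d =>
    formD n q.1 r.1 * ((min q.2 r.2 : ℕ) : ℚ) * c * d

/-- The transform `m ↦ m̂`: `m̂_{2i}^{(a)} = m_i^{(a)}` and `m̂_j^{(a)} = 0` for odd `j`,
for `a ≤ n-1`; `m̂_i^{(n)} = m̂_i^{(n+1)} = m_i^{(n)}`. -/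
noncomputable def hatM (n : ℕ) (m : Mat) : Mat :=
  Finsupp.onFinset
    (Finset.range (n+2) ×ˢ Finset.range (2 * (m.support.sup Prod.snd) + 1))
    (fun q =>
      if 1 ≤ q.1 ∧ q.1 ≤ n - 1 then (if q.2 % 2 = 0 then m (q.1, q.2 / 2) else 0)
      else if q.1 = n ∨ q.1 = n + 1 then m (n, q.2)
      else 0)
    (by
      intro q hq
      obtain ⟨a, i⟩ := q
      simp only [Finset.mem_product, Finset.mem_range]
      dsimp only at hq
      split_ifs at hq with h1 h2 h3
      · have hs : ((a, i / 2) : ℕ × ℕ) ∈ m.support := Finsupp.mem_support_iff.2 hq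
        have hle : i / 2 ≤ m.support.sup Prod.snd := Finset.le_sup (f := Prod.snd) hs
        omega
      · exact absurd rfl hq
      · have hs : ((n, i) : ℕ × ℕ) ∈ m.support := Finsupp.mem_support_iff.2 hq
        have hle : i ≤ m.support.sup Prod.snd := Finset.le_sup (f := Prod.snd) hs
        omega
      · exact absurd rfl hq)

/-- The transform `J ↦ Ĵ`: `Ĵ^{(a,2i)}` is `J^{(a,i)}` with every part doubled, for
`a ≤ n-1`; `Ĵ^{(n,i)} = Ĵ^{(n+1,i)} = J^{(n,i)}`. -/
noncomputable def hatJ (n : ℕ) (J : Rig) : Rig :=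
  Finsupp.onFinset
    (Finset.range (n+2) ×ˢ Finset.range (2 * (J.support.sup Prod.snd) + 1))
    (fun q =>
      if 1 ≤ q.1 ∧ q.1 ≤ n - 1 then
        (if q.2 % 2 = 0 then (J (q.1, q.2 / 2)).map (fun x => 2 * x) else 0)
      else if q.1 = n ∨ q.1 = n + 1 then J (n, q.2)
      else 0)
    (by
      intro q hq
      obtain ⟨a, i⟩ := q
      simp only [Finset.mem_product, Finset.mem_range]
      dsimp only at hq
      split_ifs at hq with h1 h2 h3
      · rw [Ne, Multiset.map_eq_zero] at hq
        have hs : ((a, i / 2) : ℕ × ℕ) ∈ J.support := Finsupp.mem_support_iff.2 hq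
        have hle : i / 2 ≤ J.support.sup Prod.snd := Finset.le_sup (f := Prod.snd) hs
        omega
      · exact absurd rfl hq
      · have hs : ((n, i) : ℕ × ℕ) ∈ J.support := Finsupp.mem_support_iff.2 hq
        have hle : i ≤ J.support.sup Prod.snd := Finset.le_sup (f := Prod.snd) hs
        omega
      · exact absurd rfl hq)

/-- The weight `λ̂`: `λ̂_a = 2λ_a` for `a ≤ n-1`, `λ̂_n = λ̂_{n+1} = λ_n`. -/
def hatLam (n : ℕ) (lam : ℕ → ℕ) (a : ℕ) : ℚ :=
  if 1 ≤ a ∧ a ≤ n - 1 then 2 * lam a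
  else if a = n ∨ a = n + 1 then lam n
  else 0

/-- The set `RC^v(L, λ)` of symmetric type `D_{n+1}` rigged configurations for the
data `(L̂, λ̂)`. -/
def RCv (n : ℕ) (lam : ℕ → ℕ) (L : Mat) : Set (Mat × Rig) :=
  {p | supIn (n+1) p.1 ∧ supInJ (n+1) p.2 ∧
       configD n (hatLam n lam) (hatM n L) p.1 ∧
       admD n (hatM n L) p.1 ∧
       rigD n (hatM n L) p.1 p.2 ∧
       (∀ i, p.1 (n, i) = p.1 (n+1, i) ∧ p.2 (n, i) = p.2 (n+1, i)) ∧
       (∀ a j, 1 ≤ a → a ≤ n - 1 → j % 2 = 1 → p.1 (a, j) = 0) ∧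
       (∀ a i, 1 ≤ a → a ≤ n - 1 → ∀ x ∈ p.2 (a, i), x % 2 = 0)}

section Unfolding

variable {M : Type*} [AddCommMonoid M] {n : ℕ}

def SupportedIn (N : ℕ) (m : ℕ × ℕ →₀ M) : Prop :=
  ∀ q, m q ≠ 0 → 1 ≤ q.1 ∧ q.1 ≤ N ∧ 1 ≤ q.2

-- The common shape of `hatM` (`φ = id`) and `hatJ` (`φ` doubles every part).
noncomputable def toD (n : ℕ) (φ : M →+ M) (m : ℕ × ℕ →₀ M) : ℕ × ℕ →₀ M :=
  Finsupp.onFinset (m.support.image (fun q => (q.1, 2 * q.2)) ∪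
      (m.support.image fun q => (n, q.2)) ∪ m.support.image fun q => (n + 1, q.2))
    (fun q =>
      if 1 ≤ q.1 ∧ q.1 ≤ n - 1 then (if q.2 % 2 = 0 then φ (m (q.1, q.2 / 2)) else 0)
      else if q.1 = n ∨ q.1 = n + 1 then m (n, q.2)
      else 0)
    (by
      rintro ⟨a, j⟩ hq
      simp only [Finset.mem_union, Finset.mem_image, Finsupp.mem_support_iff, Prod.mk.injEq]
      split_ifs at hq with hlow heven hspin
      · exact Or.inl (Or.inl ⟨(a, j / 2), fun h => hq (by rw [h, map_zero]), rfl, by omega⟩)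
      · exact absurd rfl hq
      · rcases hspin with rfl | rfl
        · exact Or.inl (Or.inr ⟨(a, j), hq, rfl, rfl⟩)
        · exact Or.inr ⟨(n, j), hq, rfl, rfl⟩
      · exact absurd rfl hq)

theorem toD_apply (φ : M →+ M) (m : ℕ × ℕ →₀ M) (a j : ℕ) :
    toD n φ m (a, j) =
      if 1 ≤ a ∧ a ≤ n - 1 then (if j % 2 = 0 then φ (m (a, j / 2)) else 0)
      else if a = n ∨ a = n + 1 then m (n, j)
      else 0 := rfl

noncomputable def ofD (n : ℕ) (ψ : M →+ M) (m : ℕ × ℕ →₀ M) : ℕ × ℕ →₀ M :=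
  Finsupp.onFinset (m.support.image (fun q => (q.1, q.2 / 2)) ∪ m.support)
    (fun q => if 1 ≤ q.1 ∧ q.1 ≤ n - 1 then ψ (m (q.1, 2 * q.2))
      else if q.1 = n then m (n, q.2) else 0)
    (by
      rintro ⟨a, i⟩ hq
      simp only [Finset.mem_union, Finset.mem_image, Finsupp.mem_support_iff, Prod.mk.injEq]
      split_ifs at hq with hlow hspin
      · exact Or.inl ⟨(a, 2 * i), fun h => hq (by rw [h, map_zero]), rfl, by omega⟩
      · exact Or.inr (by simpa [show a = n from hspin] using hq)
      · exact absurd rfl hq)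

theorem ofD_apply (ψ : M →+ M) (m : ℕ × ℕ →₀ M) (a i : ℕ) :
    ofD n ψ m (a, i) =
      if 1 ≤ a ∧ a ≤ n - 1 then ψ (m (a, 2 * i)) else if a = n then m (n, i) else 0 := rfl

theorem toD_apply_double {φ : M →+ M} (m : ℕ × ℕ →₀ M) {a : ℕ} (ha : 1 ≤ a ∧ a ≤ n - 1)
    (i : ℕ) : toD n φ m (a, 2 * i) = φ (m (a, i)) := by
  simp [toD_apply, ha]

theorem toD_apply_odd {φ : M →+ M} (m : ℕ × ℕ →₀ M) {a j : ℕ} (ha : 1 ≤ a ∧ a ≤ n - 1)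
    (hj : j % 2 = 1) : toD n φ m (a, j) = 0 := by
  simp [toD_apply, ha, hj]

theorem toD_apply_spin (hn : 1 ≤ n) {φ : M →+ M} (m : ℕ × ℕ →₀ M) {b : ℕ}
    (hb : b = n ∨ b = n + 1) (i : ℕ) : toD n φ m (b, i) = m (n, i) := by
  rw [toD_apply, if_neg (by omega), if_pos hb]

theorem toD_eq_sum (hn : 1 ≤ n) {φ : M →+ M} {m : ℕ × ℕ →₀ M} (hm : SupportedIn n m) :
    toD n φ m = m.sum fun q c => if q.1 ≤ n - 1 then Finsupp.single (q.1, 2 * q.2) (φ c)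
      else Finsupp.single (n, q.2) c + Finsupp.single (n + 1, q.2) c := by
  have hm0 : ∀ i, m (0, i) = 0 := fun i => by_contra fun h => by have := hm _ h; omega
  ext ⟨a, j⟩
  rw [Finsupp.sum_apply, Finsupp.sum,
    Finset.sum_eq_single (if a ≤ n - 1 then (a, j / 2) else (n, j)), toD_apply]
  · split_ifs <;> simp_all [Finsupp.single_apply] <;> grind
  · intro q hq hne
    have := hm q (Finsupp.mem_support_iff.1 hq)
    split_ifs at hne ⊢ <;> simp_all [Finsupp.single_apply] <;> grind
  · intro hq
    rw [Finsupp.notMem_support_iff.1 hq]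
    split_ifs <;> simp

theorem sum_toD (hn : 1 ≤ n) {φ : M →+ M} {m : ℕ × ℕ →₀ M} (hm : SupportedIn n m)
    {N : Type*} [AddCommMonoid N] (f : ℕ × ℕ → M → N) (hf0 : ∀ q, f q 0 = 0)
    (hfadd : ∀ q c d, f q (c + d) = f q c + f q d) :
    (toD n φ m).sum f = m.sum fun q c =>
      if q.1 ≤ n - 1 then f (q.1, 2 * q.2) (φ c) else f (n, q.2) c + f (n + 1, q.2) c := by
  rw [toD_eq_sum hn hm, Finsupp.sum_sum_index hf0 hfadd]
  refine Finsupp.sum_congr fun q _ => ?_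
  split_ifs
  · exact Finsupp.sum_single_index (hf0 _)
  · rw [Finsupp.sum_add_index' hf0 hfadd, Finsupp.sum_single_index (hf0 _),
      Finsupp.sum_single_index (hf0 _)]

theorem SupportedIn.toD {φ : M →+ M} {m : ℕ × ℕ →₀ M} (hm : SupportedIn n m) :
    SupportedIn (n + 1) (toD n φ m) := by
  rintro ⟨a, j⟩ h
  rw [toD_apply] at h
  split_ifs at h
  · have := hm _ fun h' => h (by rw [h', map_zero]); dsimp at this; omega
  · exact absurd rfl h
  · have := hm _ h; dsimp at this; omega
  · exact absurd rfl h

theorem SupportedIn.ofD {ψ : M →+ M} {m : ℕ × ℕ →₀ M} (hm : SupportedIn (n + 1) m) :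
    SupportedIn n (ofD n ψ m) := by
  rintro ⟨a, i⟩ h
  rw [ofD_apply] at h
  split_ifs at h
  · have := hm _ fun h' => h (by rw [h', map_zero]); dsimp at this; omega
  · have := hm _ h; dsimp at this; omega
  · exact absurd rfl h

theorem ofD_toD (hn : 1 ≤ n) {φ ψ : M →+ M} (hψφ : ∀ x, ψ (φ x) = x) {m : ℕ × ℕ →₀ M}
    (hm : SupportedIn n m) : ofD n ψ (toD n φ m) = m := by
  ext ⟨a, i⟩
  rw [ofD_apply]
  split_ifs with hlow hspin
  · rw [toD_apply_double _ hlow, hψφ]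
  · rw [toD_apply_spin hn _ (Or.inl rfl), hspin]
  · by_contra h
    have := hm _ (Ne.symm h); dsimp at this; omega

theorem toD_ofD {φ ψ : M →+ M} {m : ℕ × ℕ →₀ M} (hm : SupportedIn (n + 1) m)
    (hsym : ∀ i, m (n, i) = m (n + 1, i))
    (hodd : ∀ a j, 1 ≤ a → a ≤ n - 1 → j % 2 = 1 → m (a, j) = 0)
    (hφψ : ∀ a i, 1 ≤ a → a ≤ n - 1 → φ (ψ (m (a, i))) = m (a, i)) :
    toD n φ (ofD n ψ m) = m := by
  ext ⟨a, j⟩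
  rw [toD_apply]
  split_ifs with hlow heven hspin
  · rw [ofD_apply, if_pos hlow, Nat.mul_div_cancel' (Nat.dvd_of_mod_eq_zero heven),
      hφψ a j hlow.1 hlow.2]
  · rw [hodd a j hlow.1 hlow.2 (by omega)]
  · rw [ofD_apply, if_neg (by omega), if_pos rfl]
    rcases hspin with rfl | rfl
    · rfl
    · exact hsym j
  · by_contra h
    have := hm _ (Ne.symm h); dsimp at this; omega

end Unfolding

section Forms

variable {n : ℕ}

theorem formD_fold_of_le {a b : ℕ} (ha : 1 ≤ a ∧ a ≤ n + 1) (hb : 1 ≤ b ∧ b ≤ n - 1) :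
    formD n a b = formB n (min a n) b := by
  unfold formD formB edgeD
  grind

theorem formD_fold_spin (hn : 1 ≤ n) {a : ℕ} (ha : 1 ≤ a ∧ a ≤ n + 1) :
    formD n a n + formD n a (n + 1) = 2 * formB n (min a n) n := by
  unfold formD formB edgeD
  grind

theorem formB_le_zero {a : ℕ} (ha : a ≠ n) : formB n a n ≤ 0 := by
  unfold formB
  grind

theorem cartanB_eq_tB_mul (a b : ℕ) : cartanB n a b = tB n a * formB n a b := by
  unfold cartanB tB
  rw [show formB n a a = if a = n then 1 else 2 from if_pos rfl]
  split_ifs <;> ring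

end Forms

section Hat

variable {n : ℕ}

theorem hatM_eq_toD (n : ℕ) (m : Mat) : hatM n m = toD n (AddMonoidHom.id ℕ) m :=
  Finsupp.ext fun _ => rfl

theorem hatJ_eq_toD (n : ℕ) (J : Rig) : hatJ n J = toD n (Multiset.mapAddMonoidHom (2 * ·)) J :=
  Finsupp.ext fun _ => rfl

theorem hatM_apply_double (m : Mat) {a : ℕ} (ha : 1 ≤ a ∧ a ≤ n - 1) (i : ℕ) :
    hatM n m (a, 2 * i) = m (a, i) := by
  rw [hatM_eq_toD, toD_apply_double _ ha, AddMonoidHom.id_apply]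

theorem hatJ_apply_double (J : Rig) {a : ℕ} (ha : 1 ≤ a ∧ a ≤ n - 1) (i : ℕ) :
    hatJ n J (a, 2 * i) = (J (a, i)).map (2 * ·) := by
  rw [hatJ_eq_toD, toD_apply_double _ ha, Multiset.mapAddMonoidHom_apply]

theorem hatM_apply_spin (hn : 1 ≤ n) (m : Mat) {b : ℕ} (hb : b = n ∨ b = n + 1) (i : ℕ) :
    hatM n m (b, i) = m (n, i) := by
  rw [hatM_eq_toD, toD_apply_spin hn _ hb]

theorem hatJ_apply_spin (hn : 1 ≤ n) (J : Rig) {b : ℕ} (hb : b = n ∨ b = n + 1) (i : ℕ) :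
    hatJ n J (b, i) = J (n, i) := by
  rw [hatJ_eq_toD, toD_apply_spin hn _ hb]

end Hat

def lPart (L : Mat) (a i : ℕ) : ℚ :=
  L.sum fun q c => if q.1 = a then ((min i q.2 : ℕ) : ℚ) * c else 0

def pairingB (n : ℕ) (m : Mat) (a i : ℕ) : ℚ :=
  m.sum fun q c => formB n a q.1 * ((min (tB n q.1 * i) (tB n a * q.2) : ℕ) : ℚ) * c

def pairingD (n : ℕ) (m : Mat) (a i : ℕ) : ℚ :=
  m.sum fun q c => formD n a q.1 * ((min i q.2 : ℕ) : ℚ) * c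

theorem vacB_eq (n : ℕ) (L m : Mat) (a i : ℕ) :
    vacB n L m a i = lPart L a i - pairingB n m a i := rfl

theorem vacD_eq (n : ℕ) (L m : Mat) (a i : ℕ) :
    vacD n L m a i = lPart L a i - pairingD n m a i := rfl

theorem vacB_zero (n : ℕ) (L m : Mat) (a : ℕ) : vacB n L m a 0 = 0 := by
  simp [vacB]

theorem ccB_eq (n : ℕ) (m : Mat) :
    ccB n m = 1 / 2 * m.sum fun q c => pairingB n m q.1 q.2 * c := by
  unfold ccB pairingB
  congr 1
  refine Finsupp.sum_congr fun q _ => ?_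
  rw [Finsupp.sum_mul]
  exact Finsupp.sum_congr fun r _ => by ring

theorem ccD_eq (n : ℕ) (m : Mat) :
    ccD n m = 1 / 2 * m.sum fun q c => pairingD n m q.1 q.2 * c := by
  unfold ccD pairingD
  congr 1
  refine Finsupp.sum_congr fun q _ => ?_
  rw [Finsupp.sum_mul]
  exact Finsupp.sum_congr fun r _ => by ring

theorem sum_cartanB (n : ℕ) (m : Mat) (a : ℕ) :
    (m.sum fun q c => (q.2 : ℚ) * c * cartanB n a q.1) =
      tB n a * m.sum fun q c => (q.2 : ℚ) * c * formB n a q.1 := by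
  rw [Finsupp.mul_sum]
  exact Finsupp.sum_congr fun q _ => by rw [cartanB_eq_tB_mul]; ring

section Transfer

variable {n : ℕ} (hn : 1 ≤ n)
include hn

theorem sum_hatM {m : Mat} (hm : supIn n m) (F : ℕ × ℕ → ℚ) :
    ((hatM n m).sum fun q c => F q * c) = m.sum fun q c =>
      (if q.1 ≤ n - 1 then F (q.1, 2 * q.2) else F (n, q.2) + F (n + 1, q.2)) * c := by
  rw [hatM_eq_toD, sum_toD hn hm _ (by simp) (by intros; push_cast; ring)]
  refine Finsupp.sum_congr fun q _ => ?_
  split_ifs <;> simp [add_mul]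

theorem sum_hatM_row_of_le {L : Mat} (hL : supIn n L) {a : ℕ} (ha : 1 ≤ a ∧ a ≤ n - 1)
    (h : ℕ → ℚ) :
    ((hatM n L).sum fun q c => if q.1 = a then h q.2 * c else 0) =
      L.sum fun q c => if q.1 = a then h (2 * q.2) * c else 0 := by
  simp_rw [← ite_zero_mul]
  rw [sum_hatM hn hL]
  refine Finsupp.sum_congr fun q _ => ?_
  split_ifs <;> first | (exfalso; omega) | simp

theorem sum_hatM_row_spin {L : Mat} (hL : supIn n L) {b : ℕ} (hb : b = n ∨ b = n + 1)
    (h : ℕ → ℚ) :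
    ((hatM n L).sum fun q c => if q.1 = b then h q.2 * c else 0) =
      L.sum fun q c => if q.1 = n then h q.2 * c else 0 := by
  simp_rw [← ite_zero_mul]
  rw [sum_hatM hn hL]
  refine Finsupp.sum_congr fun q hq => ?_
  have := hL q (Finsupp.mem_support_iff.1 hq)
  split_ifs <;> first | (exfalso; omega) | simp

theorem sum_hatM_formD {m : Mat} (hm : supIn n m) {a : ℕ} (ha : 1 ≤ a ∧ a ≤ n + 1)
    (h : ℕ → ℚ) :
    ((hatM n m).sum fun q c => formD n a q.1 * h q.2 * c) = m.sum fun q c =>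
      formB n (min a n) q.1 * (if q.1 ≤ n - 1 then h (2 * q.2) else 2 * h q.2) * c := by
  rw [sum_hatM hn hm fun q => formD n a q.1 * h q.2]
  refine Finsupp.sum_congr fun q hq => ?_
  have := hm q (Finsupp.mem_support_iff.1 hq)
  split_ifs with hb
  · rw [formD_fold_of_le ha ⟨this.1, hb⟩]
  · rw [← add_mul, formD_fold_spin hn ha, show q.1 = n by omega]
    ring

theorem lPart_hatM {L : Mat} (hL : supIn n L) {a : ℕ} (ha : 1 ≤ a ∧ a ≤ n - 1) (x : ℕ) :
    lPart (hatM n L) a x =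
      L.sum fun q c => if q.1 = a then ((min x (2 * q.2) : ℕ) : ℚ) * c else 0 :=
  sum_hatM_row_of_le hn hL ha fun k => ((min x k : ℕ) : ℚ)

theorem lPart_hatM_double {L : Mat} (hL : supIn n L) {a : ℕ} (ha : 1 ≤ a ∧ a ≤ n - 1)
    (i : ℕ) : lPart (hatM n L) a (2 * i) = 2 * lPart L a i := by
  rw [lPart_hatM hn hL ha, lPart, Finsupp.mul_sum]
  refine Finsupp.sum_congr fun q _ => ?_
  split_ifs
  · rw [Nat.mul_min_mul_left]; push_cast; ring
  · ring

theorem lPart_hatM_spin {L : Mat} (hL : supIn n L) {b : ℕ} (hb : b = n ∨ b = n + 1) (i : ℕ) :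
    lPart (hatM n L) b i = lPart L n i :=
  sum_hatM_row_spin hn hL hb fun k => ((min i k : ℕ) : ℚ)

theorem pairingD_hatM {m : Mat} (hm : supIn n m) {a : ℕ} (ha : 1 ≤ a ∧ a ≤ n - 1) (x : ℕ) :
    pairingD n (hatM n m) a x = m.sum fun q c =>
      formB n a q.1 * (if q.1 ≤ n - 1 then ((min x (2 * q.2) : ℕ) : ℚ)
        else 2 * ((min x q.2 : ℕ) : ℚ)) * c := by
  rw [pairingD, sum_hatM_formD hn hm (by omega) fun k => ((min x k : ℕ) : ℚ),
    min_eq_left (by omega : a ≤ n)]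

theorem pairingD_hatM_double {m : Mat} (hm : supIn n m) {a : ℕ} (ha : 1 ≤ a ∧ a ≤ n - 1)
    (i : ℕ) : pairingD n (hatM n m) a (2 * i) = 2 * pairingB n m a i := by
  rw [pairingD_hatM hn hm ha, pairingB, Finsupp.mul_sum]
  refine Finsupp.sum_congr fun q hq => ?_
  have := hm q (Finsupp.mem_support_iff.1 hq)
  simp only [tB, if_neg (by omega : a ≠ n), one_mul]
  obtain hb | hb : q.1 ≤ n - 1 ∨ q.1 = n := by omega
  · rw [if_pos hb, if_neg (by omega), one_mul, Nat.mul_min_mul_left]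
    push_cast; ring
  · rw [if_neg (by omega), if_pos hb]
    ring

theorem pairingD_hatM_spin {m : Mat} (hm : supIn n m) {b : ℕ} (hb : b = n ∨ b = n + 1)
    (i : ℕ) : pairingD n (hatM n m) b i = pairingB n m n i := by
  rw [pairingD, sum_hatM_formD hn hm (by omega) fun k => ((min i k : ℕ) : ℚ),
    min_eq_right (by omega : n ≤ b), pairingB]
  refine Finsupp.sum_congr fun q hq => ?_
  have := hm q (Finsupp.mem_support_iff.1 hq)
  simp only [tB, ↓reduceIte]
  obtain hb | hb : q.1 ≤ n - 1 ∨ q.1 = n := by omega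
  · rw [if_pos hb, if_neg (by omega), one_mul]
  · rw [if_neg (by omega), if_pos hb, Nat.mul_min_mul_left]
    push_cast; ring

theorem vacD_hatM_double {L m : Mat} (hL : supIn n L) (hm : supIn n m) {a : ℕ}
    (ha : 1 ≤ a ∧ a ≤ n - 1) (i : ℕ) :
    vacD n (hatM n L) (hatM n m) a (2 * i) = 2 * vacB n L m a i := by
  rw [vacD_eq, vacB_eq, lPart_hatM_double hn hL ha, pairingD_hatM_double hn hm ha]
  ring

theorem vacD_hatM_spin {L m : Mat} (hL : supIn n L) (hm : supIn n m) {b : ℕ}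
    (hb : b = n ∨ b = n + 1) (i : ℕ) :
    vacD n (hatM n L) (hatM n m) b i = vacB n L m n i := by
  rw [vacD_eq, vacB_eq, lPart_hatM_spin hn hL hb, pairingD_hatM_spin hn hm hb]

theorem vacD_hatM_midpoint {L m : Mat} (hL : supIn n L) (hm : supIn n m) {a : ℕ}
    (ha : 1 ≤ a ∧ a ≤ n - 1) {j : ℕ} (hj : j % 2 = 1) :
    vacD n (hatM n L) (hatM n m) a (j - 1) + vacD n (hatM n L) (hatM n m) a (j + 1) ≤
      2 * vacD n (hatM n L) (hatM n m) a j := by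
  have hlPart : lPart (hatM n L) a (j - 1) + lPart (hatM n L) a (j + 1) =
      2 * lPart (hatM n L) a j := by
    rw [lPart_hatM hn hL ha, lPart_hatM hn hL ha, lPart_hatM hn hL ha, ← Finsupp.sum_add,
      Finsupp.mul_sum]
    refine Finsupp.sum_congr fun q _ => ?_
    split_ifs
    · rw [← add_mul, ← Nat.cast_add, show min (j - 1) (2 * q.2) + min (j + 1) (2 * q.2) =
        2 * min j (2 * q.2) by omega]
      push_cast; ring
    · ring
  have hpairing : 2 * pairingD n (hatM n m) a j ≤
      pairingD n (hatM n m) a (j - 1) + pairingD n (hatM n m) a (j + 1) := by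
    rw [pairingD_hatM hn hm ha, pairingD_hatM hn hm ha, pairingD_hatM hn hm ha, Finsupp.mul_sum,
      ← Finsupp.sum_add]
    refine Finsupp.sum_le_sum fun q hq => ?_
    have hc : (0 : ℚ) ≤ m q := by positivity
    split_ifs with hb
    · have hlin : ((min (j - 1) (2 * q.2) : ℕ) : ℚ) + ((min (j + 1) (2 * q.2) : ℕ) : ℚ) =
          2 * ((min j (2 * q.2) : ℕ) : ℚ) := by
        exact_mod_cast (by omega :
          min (j - 1) (2 * q.2) + min (j + 1) (2 * q.2) = 2 * min j (2 * q.2))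
      exact le_of_eq (by linear_combination (-(formB n a q.1 * m q)) * hlin)
    · have hq : q.1 = n := by have := hm q (Finsupp.mem_support_iff.1 hq); omega
      have hneg : formB n a q.1 ≤ 0 := hq ▸ formB_le_zero (by omega)
      have hconc : ((min (j - 1) q.2 : ℕ) : ℚ) + ((min (j + 1) q.2 : ℕ) : ℚ) ≤
          2 * ((min j q.2 : ℕ) : ℚ) := by
        exact_mod_cast (by omega : min (j - 1) q.2 + min (j + 1) q.2 ≤ 2 * min j q.2)
      nlinarith [mul_nonneg (neg_nonneg.2 hneg) hc]
  rw [vacD_eq, vacD_eq, vacD_eq]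
  linarith

theorem configSum_hatM {m : Mat} (hm : supIn n m) {a : ℕ} (ha : 1 ≤ a ∧ a ≤ n + 1) :
    ((hatM n m).sum fun q c => (q.2 : ℚ) * c * formD n a q.1) =
      2 * m.sum fun q c => (q.2 : ℚ) * c * formB n (min a n) q.1 := by
  calc _ = (hatM n m).sum fun q c => formD n a q.1 * (q.2 : ℚ) * c :=
        Finsupp.sum_congr fun _ _ => by ring
    _ = _ := by
      rw [sum_hatM_formD hn hm ha Nat.cast, Finsupp.mul_sum]
      refine Finsupp.sum_congr fun q _ => ?_
      split_ifs <;> push_cast <;> ring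

theorem rowDegree_hatM_of_le {L : Mat} (hL : supIn n L) {a : ℕ} (ha : 1 ≤ a ∧ a ≤ n - 1) :
    ((hatM n L).sum fun q c => if q.1 = a then (q.2 : ℚ) * c else 0) =
      2 * L.sum fun q c => if q.1 = a then (q.2 : ℚ) * c else 0 := by
  rw [sum_hatM_row_of_le hn hL ha Nat.cast, Finsupp.mul_sum]
  refine Finsupp.sum_congr fun q _ => ?_
  split_ifs <;> push_cast <;> ring

theorem ccD_hatM {m : Mat} (hm : supIn n m) : ccD n (hatM n m) = 2 * ccB n m := by
  rw [ccD_eq, ccB_eq, sum_hatM hn hm fun q => pairingD n (hatM n m) q.1 q.2, Finsupp.mul_sum,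
    Finsupp.mul_sum, Finsupp.mul_sum]
  refine Finsupp.sum_congr fun q hq => ?_
  have := hm q (Finsupp.mem_support_iff.1 hq)
  split_ifs with hb
  · rw [pairingD_hatM_double hn hm ⟨this.1, hb⟩]
    ring
  · rw [pairingD_hatM_spin hn hm (Or.inl rfl), pairingD_hatM_spin hn hm (Or.inr rfl),
      show q.1 = n by omega]
    ring

theorem Jsize_hatJ {J : Rig} (hJ : supInJ n J) : Jsize (hatJ n J) = 2 * Jsize J := by
  rw [Jsize, hatJ_eq_toD, sum_toD hn hJ (fun _ s => (s.sum : ℚ)) (fun _ => by simp)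
    (fun _ _ _ => by simp), Jsize, Finsupp.sum, Finsupp.sum, Finset.mul_sum]
  refine Finset.sum_congr rfl fun q _ => ?_
  split_ifs
  · simp [Multiset.sum_map_mul_left]
  · ring

end Transfer

theorem rig_map_two_mul_iff (s : Multiset ℕ) (c : ℕ) (v : ℚ) :
    ((s.map (2 * ·)).card ≤ c ∧ ∀ x : ℕ, x ∈ s.map (2 * ·) → 0 < x ∧ (x : ℚ) ≤ 2 * v) ↔
      (s.card ≤ c ∧ ∀ x ∈ s, 0 < x ∧ (x : ℚ) ≤ v) := by
  simp only [Multiset.card_map, Multiset.forall_mem_map_iff, Nat.cast_mul, Nat.cast_ofNat]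
  refine and_congr_right fun _ => forall₂_congr fun x _ => ?_
  constructor <;> rintro ⟨h1, h2⟩ <;> constructor <;> first | omega | linarith

section Correspondence

variable {n : ℕ} (hn : 1 ≤ n)
include hn

theorem configD_hatM_iff {lam : ℕ → ℕ} {L m : Mat} (hL : supIn n L) (hm : supIn n m) :
    configD n (hatLam n lam) (hatM n L) (hatM n m) ↔ configB n lam L m := by
  have node : ∀ b, 1 ≤ b → b ≤ n + 1 →
      (((hatM n m).sum fun q c => (q.2 : ℚ) * c * formD n b q.1) =
          ((hatM n L).sum fun q c => if q.1 = b then (q.2 : ℚ) * c else 0) - hatLam n lam b ↔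
        (m.sum fun q c => (q.2 : ℚ) * c * cartanB n (min b n) q.1) =
          (L.sum fun q c => if q.1 = min b n then (q.2 : ℚ) * c else 0) - lam (min b n)) := by
    intro b hb1 hb2
    rw [configSum_hatM hn hm ⟨hb1, hb2⟩, sum_cartanB]
    rcases (by omega : b ≤ n - 1 ∨ b = n ∨ b = n + 1) with hb | hb
    · rw [min_eq_left (by omega), rowDegree_hatM_of_le hn hL ⟨hb1, hb⟩, hatLam,
        if_pos ⟨hb1, hb⟩, tB, if_neg (by omega)]
      constructor <;> intro h <;> push_cast at h ⊢ <;> linarith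
    · rw [min_eq_right (by omega), sum_hatM_row_spin hn hL hb Nat.cast, hatLam,
        if_neg (by omega), if_pos hb, tB, if_pos rfl]
      push_cast
      rfl
  constructor
  · intro hD a ha1 ha2
    simpa [min_eq_left ha2] using (node a ha1 (by omega)).1 (hD a ha1 (by omega))
  · intro hB b hb1 hb2
    exact (node b hb1 hb2).2 (hB _ (by omega) (min_le_right _ _))

theorem admD_hatM_iff {L m : Mat} (hL : supIn n L) (hm : supIn n m) :
    admD n (hatM n L) (hatM n m) ↔ admB n L m := by
  constructor
  · intro hD a i ha1 ha2 hi
    rcases (by omega : a ≤ n - 1 ∨ a = n) with ha | rfl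
    · have h := hD a (2 * i) ha1 (by omega) (by omega)
      rw [vacD_hatM_double hn hL hm ⟨ha1, ha⟩] at h
      linarith
    · simpa [vacD_hatM_spin hn hL hm (Or.inl rfl)] using hD a i ha1 (by omega) hi
  · intro hB b i hb1 hb2 hi
    have hB0 : ∀ a i, 1 ≤ a → a ≤ n → 0 ≤ vacB n L m a i := by
      rintro a (_ | i) ha1 ha2
      · rw [vacB_zero]
      · exact hB a (i + 1) ha1 ha2 (by omega)
    rcases (by omega : b ≤ n - 1 ∨ b = n ∨ b = n + 1) with hb | hb
    · have heven : ∀ i, 0 ≤ vacD n (hatM n L) (hatM n m) b (2 * i) := fun i => by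
        rw [vacD_hatM_double hn hL hm ⟨hb1, hb⟩]
        linarith [hB0 b i hb1 (by omega)]
      obtain ⟨k, rfl | rfl⟩ := Nat.even_or_odd' i
      · exact heven k
      · have h := vacD_hatM_midpoint hn hL hm ⟨hb1, hb⟩ (j := 2 * k + 1) (by omega)
        rw [Nat.add_sub_cancel, show 2 * k + 1 + 1 = 2 * (k + 1) by ring] at h
        linarith [heven k, heven (k + 1)]
    · rw [vacD_hatM_spin hn hL hm hb]
      exact hB0 n i (by omega) le_rfl

theorem rigD_hatM_iff {L m : Mat} {J : Rig} (hL : supIn n L) (hm : supIn n m) :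
    rigD n (hatM n L) (hatM n m) (hatJ n J) ↔ rigB n L m J := by
  constructor
  · intro hD a i ha1 ha2 hi
    rcases (by omega : a ≤ n - 1 ∨ a = n) with ha | rfl
    · have h := hD a (2 * i) ha1 (by omega) (by omega)
      rwa [hatM_apply_double _ ⟨ha1, ha⟩, hatJ_apply_double _ ⟨ha1, ha⟩,
        vacD_hatM_double hn hL hm ⟨ha1, ha⟩, rig_map_two_mul_iff] at h
    · have h := hD a i ha1 (by omega) hi
      rwa [hatM_apply_spin hn _ (Or.inl rfl), hatJ_apply_spin hn _ (Or.inl rfl),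
        vacD_hatM_spin hn hL hm (Or.inl rfl)] at h
  · intro hB b i hb1 hb2 hi
    rcases (by omega : b ≤ n - 1 ∨ b = n ∨ b = n + 1) with hb | hb
    · obtain ⟨k, rfl | rfl⟩ := Nat.even_or_odd' i
      · rw [hatM_apply_double _ ⟨hb1, hb⟩, hatJ_apply_double _ ⟨hb1, hb⟩,
          vacD_hatM_double hn hL hm ⟨hb1, hb⟩, rig_map_two_mul_iff]
        exact hB b k hb1 (by omega) (by omega)
      · rw [hatJ_eq_toD, toD_apply_odd _ ⟨hb1, hb⟩ (by omega)]
        simp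
    · rw [hatM_apply_spin hn _ hb, hatJ_apply_spin hn _ hb, vacD_hatM_spin hn hL hm hb]
      exact hB n i (by omega) le_rfl hi

theorem hat_mem_RCv_iff {lam : ℕ → ℕ} {L m : Mat} {J : Rig} (hL : supIn n L)
    (hm : supIn n m) (hJ : supInJ n J) :
    (hatM n m, hatJ n J) ∈ RCv n lam L ↔ (m, J) ∈ RCB n lam L := by
  have hsupM : supIn (n + 1) (hatM n m) := by rw [hatM_eq_toD]; exact SupportedIn.toD hm
  have hsupJ : supInJ (n + 1) (hatJ n J) := by rw [hatJ_eq_toD]; exact SupportedIn.toD hJ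
  have hsym : ∀ i, hatM n m (n, i) = hatM n m (n + 1, i) ∧ hatJ n J (n, i) = hatJ n J (n + 1, i) :=
    fun i => by simp only [hatM_apply_spin hn, hatJ_apply_spin hn, true_or, or_true, and_self]
  have hodd : ∀ a j, 1 ≤ a → a ≤ n - 1 → j % 2 = 1 → hatM n m (a, j) = 0 :=
    fun a j ha1 ha2 hj => by rw [hatM_eq_toD, toD_apply_odd _ ⟨ha1, ha2⟩ hj]
  have heven : ∀ a i, 1 ≤ a → a ≤ n - 1 → ∀ x ∈ hatJ n J (a, i), x % 2 = 0 := by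
    intro a i ha1 ha2 x hx
    obtain ⟨k, rfl | rfl⟩ := Nat.even_or_odd' i
    · rw [hatJ_apply_double _ ⟨ha1, ha2⟩, Multiset.mem_map] at hx
      omega
    · rw [hatJ_eq_toD, toD_apply_odd _ ⟨ha1, ha2⟩ (by omega)] at hx
      simp at hx
  simp only [RCv, RCB, Set.mem_ofPred_eq, configD_hatM_iff hn hL hm, admD_hatM_iff hn hL hm,
    rigD_hatM_iff hn hL hm]
  exact ⟨fun ⟨_, _, hc, ha, hr, _⟩ => ⟨hm, hJ, hc, ha, hr⟩,
    fun ⟨_, _, hc, ha, hr⟩ => ⟨hsupM, hsupJ, hc, ha, hr, hsym, hodd, heven⟩⟩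

end Correspondence

noncomputable def unhat (n : ℕ) (p : Mat × Rig) : Mat × Rig :=
  (ofD n (AddMonoidHom.id ℕ) p.1, ofD n (Multiset.mapAddMonoidHom (· / 2)) p.2)

section Inverse

variable {n : ℕ} (hn : 1 ≤ n)
include hn

theorem unhat_hat {m : Mat} {J : Rig} (hm : supIn n m) (hJ : supInJ n J) :
    unhat n (hatM n m, hatJ n J) = (m, J) := by
  rw [unhat, hatM_eq_toD, hatJ_eq_toD, ofD_toD hn (fun _ => rfl) hm,
    ofD_toD hn (fun s => by simp [Multiset.map_map]) hJ]

theorem hat_unhat {lam : ℕ → ℕ} {L : Mat} {p : Mat × Rig} (hp : p ∈ RCv n lam L) :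
    (hatM n (unhat n p).1, hatJ n (unhat n p).2) = p := by
  obtain ⟨hsupM, hsupJ, -, -, hrig, hsym, hodd, heven⟩ := hp
  have hoddJ : ∀ a j, 1 ≤ a → a ≤ n - 1 → j % 2 = 1 → p.2 (a, j) = 0 := fun a j ha1 ha2 hj => by
    simpa [hodd a j ha1 ha2 hj] using (hrig a j ha1 (by omega) (by omega)).1
  refine Prod.ext ?_ ?_
  · rw [unhat, hatM_eq_toD]
    exact toD_ofD hsupM (fun i => (hsym i).1) hodd fun _ _ _ _ => rfl
  · rw [unhat, hatJ_eq_toD]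
    refine toD_ofD hsupJ (fun i => (hsym i).2) hoddJ fun a i ha1 ha2 => ?_
    simp only [Multiset.mapAddMonoidHom_apply, Multiset.map_map]
    refine (Multiset.map_congr rfl fun x hx => ?_).trans (Multiset.map_id _)
    have := heven a i ha1 ha2 x hx
    simp only [Function.comp_apply, id_eq]
    omega

theorem unhat_mem_RCB {lam : ℕ → ℕ} {L : Mat} (hL : supIn n L) {p : Mat × Rig}
    (hp : p ∈ RCv n lam L) : unhat n p ∈ RCB n lam L := by
  have hm : supIn n (unhat n p).1 := SupportedIn.ofD hp.1
  have hJ : supInJ n (unhat n p).2 := SupportedIn.ofD hp.2.1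
  rw [← hat_mem_RCv_iff hn hL hm hJ, hat_unhat hn hp]
  exact hp

end Inverse

theorem statement16 (n : ℕ) (hn : 3 ≤ n) (lam : ℕ → ℕ) (L : Mat) (hL : supIn n L) :
    Set.BijOn (fun p : Mat × Rig => (hatM n p.1, hatJ n p.2)) (RCB n lam L)
      (RCv n lam L) ∧
    ∀ p ∈ RCB n lam L,
      ccD n (hatM n p.1) + Jsize (hatJ n p.2) = 2 * (ccB n p.1 + Jsize p.2) := by
  have hn1 : 1 ≤ n := by omega
  refine ⟨Set.InvOn.bijOn (f' := unhat n) ⟨fun p hp => unhat_hat hn1 hp.1 hp.2.1,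
      fun p hp => hat_unhat hn1 hp⟩ (fun p hp => (hat_mem_RCv_iff hn1 hL hp.1 hp.2.1).2 hp)
      fun p hp => unhat_mem_RCB hn1 hL hp, fun p hp => ?_⟩
  rw [ccD_hatM hn1 hp.1, Jsize_hatJ hn1 hp.2.1]
  ring

end Stmt16
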